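/- Let q be a positive integer and P a homogeneous polynomial of degree k ≥ 2 on ℝ^{n+1} solving H(P) = c·P^m with m = (n+1)(k-2)/k, and suppose qk divides 2(n+1). Then H(P^q) = c·q^{n+1}·((qk-1)/(k-1))·(P^q)^{m'}, where m' is the integer defined by qk·m' = (n+1)(qk-2). -/

import Mathlib

/-- The `i`-th partial derivative of `F` at `x`. -/
noncomputable def pderivAt {n : ℕ} (F : (Fin n → ℝ) → ℝ) (i : Fin n) (x : Fin n → ℝ) : ℝ :=
  fderiv ℝ F x (Pi.single i 1)

/-- The Hessian matrix of second partial derivatives of `F` at `x`. -/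
noncomputable def hessMatrix {n : ℕ} (F : (Fin n → ℝ) → ℝ) (x : Fin n → ℝ) :
    Matrix (Fin n) (Fin n) ℝ :=
  Matrix.of fun i j => pderivAt (fun y => pderivAt F j y) i x

/-- The Hessian determinant of `F` at `x`. -/
noncomputable def hessDet {n : ℕ} (F : (Fin n → ℝ) → ℝ) (x : Fin n → ℝ) : ℝ :=
  (hessMatrix F x).det

/-!
Write `p = P(x)`, `g = ∇P(x)` and `H = Hess P(x)`. Then
`Hess(P^q)(x) = q(q-1) p^(q-2) g gᵀ + q p^(q-1) H`, and Euler's identity for the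
degree-`(k-1)` polynomials `∂ⱼP` gives `xᵀ H = (k-1) gᵀ`, so the rank-one term factors
through `H`:
`Hess(P^q)(x) = (b·1 + s g xᵀ) H` with `b = q p^(q-1)` and `s = q(q-1) p^(q-2)/(k-1)`.
The first factor has determinant `b^n (b + s xᵀg)`, and Euler's identity `xᵀg = k p` turns this
into `b^(n+1) (qk-1)/(k-1)`. The powers of `p` combine because `q m' = m + (q-1)(n+1)`.
-/

open MvPolynomial Matrix

namespace Matrix

variable {ι : Type*} [Fintype ι] [DecidableEq ι]

theorem det_smul_one_add_vecMulVec {R : Type*} [CommRing R] [Nonempty ι] (b : R) (u v : ι → R) :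
    (b • 1 + vecMulVec u v).det = b ^ (Fintype.card ι - 1) * (b + u ⬝ᵥ v) := by
  have h := eval_charpoly (vecMulVec (-u) v) b
  rw [charpoly_vecMulVec, scalar_apply, ← smul_one_eq_diagonal, neg_vecMulVec,
    sub_neg_eq_add] at h
  rw [← h]
  simp [← pow_sub_one_mul Fintype.card_ne_zero]
  ring

theorem smul_vecMulVec_add_smul_eq_mul {K : Type*} [Field K] {H : Matrix ι ι K} {g x : ι → K}
    {r : K} (hr : r ≠ 0) (hH : x ᵥ* H = r • g) (a b : K) :
    a • vecMulVec g g + b • H = (b • 1 + vecMulVec ((a / r) • g) x) * H := by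
  rw [add_mul, smul_one_mul, vecMulVec_mul, hH, add_comm]
  congr 1
  ext i j
  simp [vecMulVec_apply]
  field_simp

end Matrix

namespace MvPolynomial

variable {σ : Type*}

section Calculus

variable {𝕜 : Type*} [NontriviallyNormedField 𝕜] [CompleteSpace 𝕜] [Fintype σ]

theorem differentiableAt_eval (P : MvPolynomial σ 𝕜) (x : σ → 𝕜) :
    DifferentiableAt 𝕜 (fun y => eval y P) x :=
  (AnalyticOnNhd.eval_mvPolynomial P x (Set.mem_univ x)).differentiableAt

theorem fderiv_eval_apply (P : MvPolynomial σ 𝕜) (x v : σ → 𝕜) :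
    fderiv 𝕜 (fun y => eval y P) x v = ∑ i, v i * eval x (pderiv i P) := by
  classical
  induction P using MvPolynomial.induction_on with
  | C a => simp
  | add p r hp hr =>
      simp only [map_add]
      rw [fderiv_fun_add (differentiableAt_eval p x) (differentiableAt_eval r x)]
      simp [hp, hr, mul_add, Finset.sum_add_distrib]
  | mul_X p i hp =>
      simp only [eval_mul, eval_X]
      rw [fderiv_fun_mul (differentiableAt_eval p x) (differentiableAt_apply i x),
        (hasFDerivAt_apply i x).fderiv]
      simp [hp, pderiv_X, Pi.single_apply, mul_add, Finset.sum_add_distrib, Finset.mul_sum,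
        apply_ite (eval x), mul_left_comm]
      ring

end Calculus

noncomputable def evalGradient {R : Type*} [CommSemiring R] (x : σ → R) (P : MvPolynomial σ R) :
    σ → R :=
  fun i => eval x (pderiv i P)

theorem IsHomogeneous.evalGradient_dotProduct {R : Type*} [CommSemiring R] [Fintype σ]
    {P : MvPolynomial σ R} {k : ℕ} (hP : P.IsHomogeneous k) (x : σ → R) :
    evalGradient x P ⬝ᵥ x = k * eval x P := by
  simpa [evalGradient, dotProduct, mul_comm] using congrArg (eval x) hP.sum_X_mul_pderiv

theorem pderiv_pderiv_pow {R : Type*} [CommRing R] (i j : σ) (P : MvPolynomial σ R) (q : ℕ) :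
    pderiv i (pderiv j (P ^ q))
      = q * (q - 1) * P ^ (q - 2) * pderiv i P * pderiv j P
        + q * P ^ (q - 1) * pderiv i (pderiv j P) := by
  rw [pderiv_pow, Derivation.leibniz, Derivation.leibniz, pderiv_pow, Derivation.map_natCast]
  rcases q with _ | q
  · simp
  · simp only [smul_eq_mul, Nat.add_sub_cancel, Nat.cast_succ, show q + 1 - 2 = q - 1 by omega]
    ring

end MvPolynomial

theorem pderivAt_eval {n : ℕ} (P : MvPolynomial (Fin n) ℝ) (i : Fin n) (x : Fin n → ℝ) :
    pderivAt (fun y => eval y P) i x = eval x (pderiv i P) := by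
  classical
  simp [pderivAt, fderiv_eval_apply, Pi.single_apply]

theorem hessMatrix_eval {n : ℕ} (P : MvPolynomial (Fin n) ℝ) (x : Fin n → ℝ) :
    hessMatrix (fun y => eval y P) x = of fun i j => eval x (pderiv i (pderiv j P)) := by
  ext i j
  simp only [hessMatrix, pderivAt_eval, of_apply]

theorem hessMatrix_eval_pow {n : ℕ} (P : MvPolynomial (Fin n) ℝ) (q : ℕ) (x : Fin n → ℝ) :
    hessMatrix (fun y => eval y P ^ q) x
      = (q * (q - 1) * eval x P ^ (q - 2) : ℝ) • vecMulVec (evalGradient x P) (evalGradient x P)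
        + (q * eval x P ^ (q - 1) : ℝ) • hessMatrix (fun y => eval y P) x := by
  simp_rw [← map_pow, hessMatrix_eval, pderiv_pderiv_pow]
  ext i j
  simp [vecMulVec_apply, evalGradient]
  ring

theorem MvPolynomial.IsHomogeneous.vecMul_hessMatrix_eval {n k : ℕ}
    {P : MvPolynomial (Fin n) ℝ} (hP : P.IsHomogeneous k) (x : Fin n → ℝ) :
    x ᵥ* hessMatrix (fun y => eval y P) x = ((k - 1 : ℕ) : ℝ) • evalGradient x P := by
  ext j
  rw [hessMatrix_eval, Pi.smul_apply, smul_eq_mul, evalGradient,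
    ← (hP.pderiv (i := j)).evalGradient_dotProduct, dotProduct_comm]
  rfl

theorem MvPolynomial.IsHomogeneous.hessDet_pow_eval {n k : ℕ}
    {P : MvPolynomial (Fin (n + 1)) ℝ} (hP : P.IsHomogeneous k) (hk : 2 ≤ k) (q : ℕ)
    (x : Fin (n + 1) → ℝ) :
    hessDet (fun y => eval y P ^ q) x
      = (q * eval x P ^ (q - 1)) ^ (n + 1) * (((q : ℝ) * k - 1) / ((k : ℝ) - 1))
        * hessDet (fun y => eval y P) x := by
  have hk1 : (k : ℝ) - 1 ≠ 0 := by
    have : (2 : ℝ) ≤ k := by exact_mod_cast hk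
    linarith
  have hxH := hP.vecMul_hessMatrix_eval x
  rw [Nat.cast_sub (by omega), Nat.cast_one] at hxH
  rw [hessDet, hessMatrix_eval_pow, smul_vecMulVec_add_smul_eq_mul hk1 hxH, det_mul,
    det_smul_one_add_vecMulVec, ← hessDet, Fintype.card_fin, Nat.add_sub_cancel, smul_dotProduct,
    hP.evalGradient_dotProduct, smul_eq_mul]
  set p := eval x P
  have hpow : (q : ℝ) * (q - 1) * p ^ (q - 2) * p = q * (q - 1) * p ^ (q - 1) := by
    rcases q with _ | _ | q
    · simp
    · simp
    · simp [pow_succ, mul_assoc]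
  congr 1
  field_simp
  linear_combination (k : ℝ) * (q * p ^ (q - 1)) ^ n * hpow

theorem stmt9_general (n k m q m' : ℕ) (hk : 2 ≤ k) (hq : 0 < q)
    (hm : k * m = (n + 1) * (k - 2)) (hm' : q * k * m' = (n + 1) * (q * k - 2))
    (c : ℝ) (P : MvPolynomial (Fin (n + 1)) ℝ) (hP : P.IsHomogeneous k)
    (hH : ∀ x : Fin (n + 1) → ℝ,
      hessDet (fun y => MvPolynomial.eval y P) x = c * (MvPolynomial.eval x P) ^ m) :
    ∀ x : Fin (n + 1) → ℝ,
      hessDet (fun y => (MvPolynomial.eval y P) ^ q) x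
        = c * (q : ℝ) ^ (n + 1) * (((q : ℝ) * (k : ℝ) - 1) / ((k : ℝ) - 1))
            * ((MvPolynomial.eval x P) ^ q) ^ m' := by
  intro x
  have hexp : q * m' = m + (q - 1) * (n + 1) := by
    have hqk : 2 ≤ q * k := by nlinarith
    refine Nat.eq_of_mul_eq_mul_left (by omega : 0 < k) ?_
    zify [hk, hqk, hq] at hm hm' ⊢
    linear_combination hm' - hm
  rw [hP.hessDet_pow_eval hk q x, hH x, ← pow_mul, hexp, pow_add (eval x P),
    pow_mul (eval x P), mul_pow (q : ℝ)]
  ring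

theorem stmt9 (n k m q m' : ℕ) (hk : 2 ≤ k) (hq : 0 < q) (hdvd : q * k ∣ 2 * (n + 1))
    (hm : k * m = (n + 1) * (k - 2)) (hm' : q * k * m' = (n + 1) * (q * k - 2))
    (c : ℝ) (P : MvPolynomial (Fin (n + 1)) ℝ) (hP : P.IsHomogeneous k)
    (hH : ∀ x : Fin (n + 1) → ℝ,
      hessDet (fun y => MvPolynomial.eval y P) x = c * (MvPolynomial.eval x P) ^ m) :
    ∀ x : Fin (n + 1) → ℝ,
      hessDet (fun y => (MvPolynomial.eval y P) ^ q) x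
        = c * (q : ℝ) ^ (n + 1) * (((q : ℝ) * (k : ℝ) - 1) / ((k : ℝ) - 1))
            * ((MvPolynomial.eval x P) ^ q) ^ m' :=
  stmt9_general n k m q m' hk hq hm hm' c P hP hH
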